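/- arXiv:2403.17091 — 9 statements merged into one kernel-verified Lean document; each statement's English description precedes it below -/
import Mathlib

section
/- Let H ≥ 2 be a natural number and let a, b : ℕ → ℝ be the occupancy sequences of the offline policy π_b in the Example 3.1 chain, i.e. a_1 = (H−1)/(2H), b_1 = 1/(2H), and a_{h+1} = ((1−1/H²)/2)·a_h, b_{h+1} = (1/H²)·a_h + ((1−1/H²)/2)·b_h. Define the aggregated occupancy sequence d̄ : ℕ → ℝ by d̄_1 = a_1 + b_1 and d̄_{h+1} = ((a_h + b_h/2)/(a_h + b_h))·d̄_h. Then d̄_H ≥ 1/41 and d̄_H ≥ 2^{H−7}·(a_H + b_H), where 2^{H−7} denotes the real power (2 : ℝ)^(H−7) with integer exponent H−7. -/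
set_option maxHeartbeats 1600000


/-- In the Example 3.1 chain, with occupancy sequences `a`, `b` of the
offline policy `π_b` and the aggregated occupancy sequence `d`, the aggregated
occupancy at the last layer satisfies `d H ≥ 1/41` and
`d H ≥ 2^(H−7) · (a H + b H)` (real power with integer exponent `H − 7`). -/
theorem aggregated_occupancy_lower_bound
    (H : ℕ) (hH : 2 ≤ H) (a b d : ℕ → ℝ)
    (ha1 : a 1 = ((H : ℝ) - 1) / (2 * H))
    (hb1 : b 1 = 1 / (2 * H))
    (ha : ∀ h, 1 ≤ h → a (h + 1) = ((1 - 1 / (H : ℝ) ^ 2) / 2) * a h)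
    (hb : ∀ h, 1 ≤ h →
      b (h + 1) = (1 / (H : ℝ) ^ 2) * a h + ((1 - 1 / (H : ℝ) ^ 2) / 2) * b h)
    (hd1 : d 1 = a 1 + b 1)
    (hd : ∀ h, 1 ≤ h → d (h + 1) = ((a h + b h / 2) / (a h + b h)) * d h) :
    d H ≥ 1 / 41 ∧ d H ≥ (2 : ℝ) ^ ((H : ℤ) - 7) * (a H + b H) := by
  have hH2 : (2 : ℝ) ≤ (H : ℝ) := by exact_mod_cast hH
  have hHpos : (0 : ℝ) < (H : ℝ) := by linarith
  have hHne : (H : ℝ) ≠ 0 := ne_of_gt hHpos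
  set q : ℝ := (1 - 1 / (H : ℝ) ^ 2) / 2 with hqdef
  set a1 : ℝ := ((H : ℝ) - 1) / (2 * H) with ha1def
  set b1 : ℝ := 1 / (2 * (H : ℝ)) with hb1def
  set c : ℝ := 1 / ((H : ℝ) * ((H : ℝ) + 1)) with hcdef
  set M : ℝ := 3 / (2 * ((H : ℝ) + 1)) with hMdef
  clear_value q a1 b1 c M
  have hHsq : (4 : ℝ) ≤ (H : ℝ) ^ 2 := by nlinarith
  have hqpos : 0 < q := by
    rw [hqdef]
    have h1 : 1 / (H : ℝ) ^ 2 ≤ 1 / 4 := by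
      rw [div_le_div_iff₀ (by positivity) (by norm_num)]; linarith
    linarith
  have hqle : q ≤ 1 / 2 := by
    rw [hqdef]
    have h1 : 0 < 1 / (H : ℝ) ^ 2 := by positivity
    linarith
  have ha1pos : 0 < a1 := by
    rw [ha1def]; apply div_pos <;> linarith
  have hb1pos : 0 < b1 := by rw [hb1def]; positivity
  have hcpos : 0 < c := by rw [hcdef]; positivity
  have hMpos : 0 < M := by rw [hMdef]; positivity
  -- `a 1` and `b 1` in the new notation
  have ha1' : a 1 = a1 := ha1
  have hb1' : b 1 = b1 := hb1
  -- key algebraic identity used in the closed form for `b`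
  have hkey : (1 / (H : ℝ) ^ 2) * a1 = q * c := by
    rw [ha1def, hqdef, hcdef]
    field_simp
    ring
  -- closed forms for a and b
  have closed : ∀ n : ℕ, a (n + 1) = q ^ n * a1 ∧ b (n + 1) = q ^ n * (b1 + c * n) := by
    intro n
    induction n with
    | zero => simpa using ⟨ha1', hb1'⟩
    | succ n ih =>
      obtain ⟨iha, ihb⟩ := ih
      constructor
      · rw [ha (n + 1) (by omega), iha]; ring
      · rw [hb (n + 1) (by omega), iha, ihb]
        push_cast
        linear_combination (q ^ n) * hkey
  have hapos : ∀ n : ℕ, 0 < a (n + 1) := by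
    intro n; rw [(closed n).1]; positivity
  have hbpos : ∀ n : ℕ, 0 < b (n + 1) := by
    intro n
    rw [(closed n).2]
    have : (0 : ℝ) ≤ (n : ℝ) := Nat.cast_nonneg n
    have : 0 < b1 + c * n := by nlinarith
    positivity
  -- the main invariant
  have inv : ∀ n : ℕ, n + 1 ≤ H → d (n + 1) ≥ (1 / 2) * Real.exp (-(M * n)) := by
    intro n
    induction n with
    | zero =>
      intro _
      have hd1' : d 1 = 1 / 2 := by
        rw [hd1, ha1', hb1', ha1def, hb1def]
        field_simp
        ring
      simp [hd1']
    | succ n ih =>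
      intro hle
      have hn1 : n + 1 ≤ H := by omega
      have ihd := ih hn1
      have hnH : (n : ℝ) ≤ (H : ℝ) - 2 := by
        have : (n : ℝ) + 2 ≤ (H : ℝ) := by exact_mod_cast hle
        linarith
      have hA := (closed n).1
      have hB := (closed n).2
      have hApos := hapos n
      have hBpos := hbpos n
      -- core inequality : b 1 + c n ≤ 2 M a1
      have hcore : b1 + c * (n : ℝ) ≤ 2 * M * a1 := by
        have e1 : b1 + c * (n : ℝ) = ((H : ℝ) + 1 + 2 * n) / (2 * H * ((H : ℝ) + 1)) := by
          rw [hb1def, hcdef]; field_simp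
        have e2 : 2 * M * a1 = (3 * ((H : ℝ) - 1)) / (2 * H * ((H : ℝ) + 1)) := by
          rw [hMdef, ha1def]; field_simp
        rw [e1, e2, div_le_div_iff₀ (by positivity) (by positivity)]
        nlinarith [hHpos, hnH]
      have hBle : b (n + 1) ≤ 2 * M * a (n + 1) := by
        rw [hA, hB]
        have hqn : (0 : ℝ) ≤ q ^ n := le_of_lt (pow_pos hqpos n)
        calc q ^ n * (b1 + c * n) ≤ q ^ n * (2 * M * a1) :=
              mul_le_mul_of_nonneg_left hcore hqn
          _ = 2 * M * (q ^ n * a1) := by ring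
      -- the one–step factor is at least exp (-M)
      have hf : Real.exp (-M) ≤ (a (n + 1) + b (n + 1) / 2) / (a (n + 1) + b (n + 1)) := by
        have hABpos : 0 < a (n + 1) + b (n + 1) := by linarith
        rw [le_div_iff₀ hABpos]
        have hexpM : 1 + M ≤ Real.exp M := by
          have := Real.add_one_le_exp M; linarith
        have hinv : Real.exp (-M) ≤ 1 / (1 + M) := by
          rw [Real.exp_neg]
          apply inv_le_of_inv_le₀ (by positivity)
          rw [one_div, inv_inv]
          exact hexpM
        have h1 : Real.exp (-M) * (a (n + 1) + b (n + 1)) ≤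
            (1 / (1 + M)) * (a (n + 1) + b (n + 1)) :=
          mul_le_mul_of_nonneg_right hinv (le_of_lt hABpos)
        have h2 : (1 / (1 + M)) * (a (n + 1) + b (n + 1)) ≤ a (n + 1) + b (n + 1) / 2 := by
          rw [div_mul_eq_mul_div, div_le_iff₀ (by positivity)]
          nlinarith [hBle, mul_pos hMpos hBpos]
        linarith
      have hstep := hd (n + 1) (by omega)
      have hfpos : 0 < Real.exp (-M) := Real.exp_pos _
      have hdpos : (0 : ℝ) ≤ (1 / 2) * Real.exp (-(M * n)) := by positivity
      have : Real.exp (-M) * ((1 / 2) * Real.exp (-(M * n))) ≤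
          ((a (n + 1) + b (n + 1) / 2) / (a (n + 1) + b (n + 1))) * d (n + 1) :=
        mul_le_mul hf ihd hdpos (le_trans (le_of_lt hfpos) hf)
      have heq : Real.exp (-M) * ((1 / 2) * Real.exp (-(M * n))) =
          (1 / 2) * Real.exp (-(M * ((n : ℝ) + 1))) := by
        rw [show (-(M * ((n : ℝ) + 1))) = (-M) + (-(M * (n : ℝ))) by ring, Real.exp_add]
        ring
      rw [hstep]
      push_cast
      linarith [heq ▸ this]
  -- apply the invariant at the last layer
  obtain ⟨m, rfl⟩ : ∃ m, H = m + 1 := ⟨H - 1, by omega⟩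
  have hinvH := inv m (le_refl _)
  have hmR : (m : ℝ) = (↑(m + 1) : ℝ) - 1 := by push_cast; ring
  have hMm : M * m ≤ 2 := by
    rw [hMdef, hmR]
    rw [div_mul_eq_mul_div, div_le_iff₀ (by positivity)]
    nlinarith
  have hexp2 : Real.exp (-(M * m)) ≥ Real.exp (-2) :=
    Real.exp_le_exp.mpr (by linarith)
  have hexp41 : Real.exp (-2) ≥ 2 / 41 := by
    have h1 : Real.exp 1 < 2.7182818286 := Real.exp_one_lt_d9
    have h2 : Real.exp 2 = Real.exp 1 * Real.exp 1 := by
      rw [← Real.exp_add]; norm_num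
    have h3 : Real.exp 2 < 41 / 2 := by
      rw [h2]; nlinarith [Real.exp_pos 1]
    have h4 : Real.exp (-2) = 1 / Real.exp 2 := by
      rw [Real.exp_neg, one_div]
    rw [h4, ge_iff_le, div_le_div_iff₀ (by norm_num) (Real.exp_pos 2)]
    nlinarith [Real.exp_pos 2]
  have hd41 : d (m + 1) ≥ 1 / 41 := by
    calc d (m + 1) ≥ (1 / 2) * Real.exp (-(M * m)) := hinvH
      _ ≥ (1 / 2) * (2 / 41) := by nlinarith
      _ = 1 / 41 := by norm_num
  refine ⟨hd41, ?_⟩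
  -- second claim: the occupancy at the last layer is exponentially small
  have hAm := (closed m).1
  have hBm := (closed m).2
  have hsum : a (m + 1) + b (m + 1) ≤ (1 / 2 : ℝ) ^ m := by
    rw [hAm, hBm]
    have hqn : q ^ m ≤ (1 / 2 : ℝ) ^ m :=
      pow_le_pow_left₀ (le_of_lt hqpos) hqle m
    have hqnn : (0 : ℝ) ≤ q ^ m := le_of_lt (pow_pos hqpos m)
    have hone : a1 + (b1 + c * m) ≤ 1 := by
      have e3 : a1 + (b1 + c * (m : ℝ)) =
          (((m + 1 : ℕ) : ℝ) * (((m + 1 : ℕ) : ℝ) + 1) + 2 * m) /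
            (2 * ((m + 1 : ℕ) : ℝ) * (((m + 1 : ℕ) : ℝ) + 1)) := by
        rw [ha1def, hb1def, hcdef]; field_simp; ring
      rw [e3, div_le_one (by positivity)]
      have hm1 : (m : ℝ) + 1 = ((m + 1 : ℕ) : ℝ) := by push_cast; ring
      nlinarith [hH2, hm1]
    calc q ^ m * a1 + q ^ m * (b1 + c * m) = q ^ m * (a1 + (b1 + c * m)) := by ring
      _ ≤ q ^ m * 1 := mul_le_mul_of_nonneg_left hone hqnn
      _ = q ^ m := by ring
      _ ≤ (1 / 2 : ℝ) ^ m := hqn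
  have hzpow : (2 : ℝ) ^ (((m + 1 : ℕ) : ℤ) - 7) * (1 / 2 : ℝ) ^ m = (2 : ℝ) ^ (-6 : ℤ) := by
    have h12 : ((1 / 2 : ℝ)) ^ m = (2 : ℝ) ^ (-(m : ℤ)) := by
      rw [zpow_neg, zpow_natCast, one_div, inv_pow]
    rw [h12, ← zpow_add₀ (by norm_num : (2 : ℝ) ≠ 0)]
    congr 1
    push_cast
    ring
  have h2pos : (0 : ℝ) ≤ (2 : ℝ) ^ (((m + 1 : ℕ) : ℤ) - 7) := by positivity
  calc (2 : ℝ) ^ (((m + 1 : ℕ) : ℤ) - 7) * (a (m + 1) + b (m + 1))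
      ≤ (2 : ℝ) ^ (((m + 1 : ℕ) : ℤ) - 7) * (1 / 2 : ℝ) ^ m :=
        mul_le_mul_of_nonneg_left hsum h2pos
    _ = (2 : ℝ) ^ (-6 : ℤ) := hzpow
    _ = 1 / 64 := by norm_num
    _ ≤ 1 / 41 := by norm_num
    _ ≤ d (m + 1) := hd41
end

section
/- Let H ≥ 2 be a natural number. Let a, b, c : ℕ → ℝ be the occupancy sequences of the offline policy π_b in the Example 3.1 chain (recursions with p¹_h = p²_h = 1/H²), and let a', b', c' : ℕ → ℝ be the occupancy sequences of an arbitrary Markov policy, i.e. sequences satisfying the same recursions with arbitrary layer-dependent probabilities p¹_h, p²_h ∈ [0,1] and the same initial values a'_1 = (H−1)/(2H), b'_1 = 1/(2H), c'_1 = 1/2. Then for every h with 1 ≤ h ≤ H: a'_h ≤ 8H·a_h, b'_h ≤ 8H·b_h, and c'_h ≤ 8H·c_h. -/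
set_option maxHeartbeats 1000000 in
/-- In the Example 3.1 chain, the occupancy sequences of any Markov
policy are dominated, layer by layer up to `H`, by `8H` times the occupancy
sequences of the offline policy `π_b` (which plays `a₁` with probability `1/H²`). -/
theorem all_policy_concentrability_bound
    (H : ℕ) (hH : 2 ≤ H)
    (a b c : ℕ → ℝ) (a' b' c' : ℕ → ℝ) (p1 p2 : ℕ → ℝ)
    (hp1 : ∀ h, 0 ≤ p1 h ∧ p1 h ≤ 1) (hp2 : ∀ h, 0 ≤ p2 h ∧ p2 h ≤ 1)
    (ha1 : a 1 = ((H : ℝ) - 1) / (2 * H))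
    (hb1 : b 1 = 1 / (2 * H))
    (hc1 : c 1 = 1 / 2)
    (ha : ∀ h, 1 ≤ h → a (h + 1) = ((1 - 1 / (H : ℝ) ^ 2) / 2) * a h)
    (hb : ∀ h, 1 ≤ h →
      b (h + 1) = (1 / (H : ℝ) ^ 2) * a h + ((1 - 1 / (H : ℝ) ^ 2) / 2) * b h)
    (hc : ∀ h, 1 ≤ h →
      c (h + 1) = ((1 - 1 / (H : ℝ) ^ 2) / 2) * a h
        + ((1 + 1 / (H : ℝ) ^ 2) / 2) * b h + c h)
    (ha1' : a' 1 = ((H : ℝ) - 1) / (2 * H))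
    (hb1' : b' 1 = 1 / (2 * H))
    (hc1' : c' 1 = 1 / 2)
    (ha' : ∀ h, 1 ≤ h → a' (h + 1) = ((1 - p1 h) / 2) * a' h)
    (hb' : ∀ h, 1 ≤ h → b' (h + 1) = p1 h * a' h + ((1 - p2 h) / 2) * b' h)
    (hc' : ∀ h, 1 ≤ h →
      c' (h + 1) = ((1 - p1 h) / 2) * a' h + ((1 + p2 h) / 2) * b' h + c' h) :
    ∀ h, 1 ≤ h → h ≤ H →
      a' h ≤ 8 * H * a h ∧ b' h ≤ 8 * H * b h ∧ c' h ≤ 8 * H * c h := by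
  have hHr : (2:ℝ) ≤ (H:ℝ) := by exact_mod_cast hH
  have hH0 : (0:ℝ) < (H:ℝ) := by linarith
  set p : ℝ := 1 / (H : ℝ) ^ 2 with hpdef
  have hp0 : 0 ≤ p := by positivity
  have hp4 : p ≤ 1/4 := by
    rw [hpdef, div_le_div_iff₀ (by positivity) (by norm_num)]
    nlinarith
  set q : ℝ := (1 - p) / 2 with hqdef
  have hq0 : 0 ≤ q := by rw [hqdef]; linarith
  have hq12 : q ≤ 1/2 := by rw [hqdef]; linarith
  set a1 : ℝ := ((H : ℝ) - 1) / (2 * H) with ha1def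
  set b1 : ℝ := 1 / (2 * (H:ℝ)) with hb1def
  have ha1nn : 0 ≤ a1 := by
    rw [ha1def]; apply div_nonneg <;> nlinarith
  have hb1nn : 0 ≤ b1 := by rw [hb1def]; positivity
  -- offline occupancies
  have haq : ∀ h, 1 ≤ h → a h = a1 * q ^ (h - 1) := by
    intro h h1
    induction h, h1 using Nat.le_induction with
    | base => simpa using ha1
    | succ n hn ih =>
      rw [ha n hn, ih, show n + 1 - 1 = (n - 1) + 1 from by omega, pow_succ]
      rw [hqdef]; ring
  have hbq : ∀ h, 1 ≤ h → b1 * q ^ (h - 1) ≤ b h := by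
    intro h h1
    induction h, h1 using Nat.le_induction with
    | base => simp [hb1, hb1def]
    | succ n hn ih =>
      rw [hb n hn, show n + 1 - 1 = (n - 1) + 1 from by omega, pow_succ]
      have han : a n = a1 * q ^ (n - 1) := haq n hn
      have h1 : 0 ≤ a n := by rw [han]; positivity
      have h2 : 0 ≤ p * a n := mul_nonneg hp0 h1
      nlinarith [mul_le_mul_of_nonneg_left ih hq0,
        mul_nonneg hb1nn (pow_nonneg hq0 (n-1))]
  have hcq : ∀ h, 1 ≤ h → (1:ℝ)/2 ≤ c h := by
    intro h h1
    induction h, h1 using Nat.le_induction with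
    | base => rw [hc1]
    | succ n hn ih =>
      rw [hc n hn]
      have h1 : 0 ≤ a n := by rw [haq n hn]; positivity
      have h2 : 0 ≤ b n := le_trans (by positivity) (hbq n hn)
      nlinarith
  -- policy occupancies: nonnegativity
  have hnn : ∀ h, 1 ≤ h → 0 ≤ a' h ∧ 0 ≤ b' h ∧ 0 ≤ c' h := by
    intro h h1
    induction h, h1 using Nat.le_induction with
    | base =>
      refine ⟨by rw [ha1']; exact ha1nn, by rw [hb1']; positivity, by rw [hc1']; norm_num⟩
    | succ n hn ih =>
      obtain ⟨ia, ib, ic⟩ := ih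
      obtain ⟨hp1l, hp1r⟩ := hp1 n
      obtain ⟨hp2l, hp2r⟩ := hp2 n
      refine ⟨?_, ?_, ?_⟩
      · rw [ha' n hn]; apply mul_nonneg (by linarith) ia
      · rw [hb' n hn]
        have t1 := mul_nonneg hp1l ia
        have t2 : 0 ≤ (1 - p2 n)/2 * b' n := mul_nonneg (by linarith) ib
        linarith
      · rw [hc' n hn]
        have t1 : 0 ≤ (1 - p1 n)/2 * a' n := mul_nonneg (by linarith) ia
        have t2 : 0 ≤ (1 + p2 n)/2 * b' n := mul_nonneg (by linarith) ib
        linarith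
  -- mass conservation
  have hsum : ∀ h, 1 ≤ h → a' h + b' h + c' h = 1 := by
    intro h h1
    induction h, h1 using Nat.le_induction with
    | base =>
      have hne : (H:ℝ) ≠ 0 := ne_of_gt hH0
      rw [ha1', hb1', hc1', ha1def, hb1def]
      field_simp
      ring
    | succ n hn ih =>
      rw [ha' n hn, hb' n hn, hc' n hn]
      linear_combination ih
  -- a' decays at rate 1/2
  have ha'bd : ∀ h, 1 ≤ h → a' h ≤ (1/2:ℝ) ^ (h - 1) * a1 := by
    intro h h1
    induction h, h1 using Nat.le_induction with
    | base => simp [ha1']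
    | succ n hn ih =>
      rw [ha' n hn, show n + 1 - 1 = (n - 1) + 1 from by omega, pow_succ]
      have ia := (hnn n hn).1
      obtain ⟨hp1l, _⟩ := hp1 n
      nlinarith [mul_nonneg hp1l ia]
  -- invariant b' + 2a' halves
  have hD : ∀ h, 1 ≤ h → b' h + 2 * a' h ≤ (1/2:ℝ) ^ (h - 1) := by
    intro h h1
    induction h, h1 using Nat.le_induction with
    | base =>
      rw [hb1', ha1']
      have e : 1/(2*(H:ℝ)) + 2 * (((H:ℝ)-1)/(2*(H:ℝ))) = 1 - 1/(2*(H:ℝ)) := by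
        field_simp; ring
      have : (0:ℝ) ≤ 1/(2*(H:ℝ)) := by positivity
      simp only [Nat.sub_self, pow_zero]
      linarith
    | succ n hn ih =>
      rw [hb' n hn, ha' n hn, show n + 1 - 1 = (n - 1) + 1 from by omega, pow_succ]
      have ib := (hnn n hn).2.1
      obtain ⟨hp2l, _⟩ := hp2 n
      nlinarith [mul_nonneg hp2l ib]
  -- Bernoulli
  have hber : ∀ n : ℕ, 1 - (n:ℝ) * p ≤ (1 - p) ^ n := by
    intro n
    have h2 : (-2:ℝ) ≤ -p := by linarith
    have := one_add_mul_le_pow h2 n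
    rw [show (1:ℝ) + -p = 1 - p from by ring] at this
    linarith
  -- main
  intro h h1 hhH
  set n : ℕ := h - 1 with hn
  have hhn : h = n + 1 := by omega
  have hnH : (n:ℝ) ≤ (H:ℝ) - 1 := by
    have : (n:ℝ) + 1 ≤ (H:ℝ) := by exact_mod_cast (show n + 1 ≤ H from by omega)
    linarith
  have hnp : (n:ℝ) * p ≤ 1/2 := by
    rw [hpdef, mul_one_div, div_le_iff₀ (by positivity)]
    nlinarith
  have hhalf : (1:ℝ)/2 ≤ (1 - p) ^ n := le_trans (by linarith) (hber n)
  have hkey : (1/2:ℝ) ^ n ≤ 2 * q ^ n := by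
    rw [hqdef, div_pow, div_pow, one_pow]
    rw [div_le_iff₀ (by positivity)]
    have h2n : (0:ℝ) < 2 ^ n := by positivity
    rw [show 2 * ((1-p)^n / 2^n) * 2^n = 2 * (1-p)^n from by field_simp]
    linarith
  have hqn0 : (0:ℝ) ≤ q ^ n := pow_nonneg hq0 n
  refine ⟨?_, ?_, ?_⟩
  · -- a'
    have h1' := ha'bd h h1
    have h2' := haq h h1
    rw [show h - 1 = n from rfl] at h1' h2'
    rw [h2']
    have t1 : (1/2:ℝ)^n * a1 ≤ 2 * q^n * a1 := by
      nlinarith [mul_le_mul_of_nonneg_right hkey ha1nn]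
    nlinarith [mul_nonneg hqn0 ha1nn]
  · -- b'
    have hDb := hD h h1
    have ia := (hnn h h1).1
    have hbh := hbq h h1
    rw [show h - 1 = n from rfl] at hDb hbh
    have e : 8 * (H:ℝ) * (b1 * q^n) = 4 * q^n := by
      rw [hb1def]; field_simp; ring
    have : 8 * (H:ℝ) * (b1 * q^n) ≤ 8 * (H:ℝ) * b h := by
      apply mul_le_mul_of_nonneg_left hbh (by positivity)
    calc b' h ≤ (1/2:ℝ)^n := by linarith
      _ ≤ 2 * q^n := hkey
      _ ≤ 4 * q^n := by linarith
      _ = 8 * (H:ℝ) * (b1 * q^n) := e.symm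
      _ ≤ 8 * (H:ℝ) * b h := this
  · -- c'
    have hs := hsum h h1
    obtain ⟨ia, ib, ic⟩ := hnn h h1
    have hch := hcq h h1
    nlinarith
end

section
/- Let H ≥ 2 be a natural number and let a, b, c : ℕ → ℝ be the occupancy sequences of the offline policy π_b in the Example 3.1 chain, i.e. a_1 = (H−1)/(2H), b_1 = 1/(2H), c_1 = 1/2, a_{h+1} = ((1−1/H²)/2)·a_h, b_{h+1} = (1/H²)·a_h + ((1−1/H²)/2)·b_h, and c_{h+1} = ((1−1/H²)/2)·a_h + ((1+1/H²)/2)·b_h + c_h. Then for every h with 1 ≤ h ≤ H: a_h ≥ 1/2^{h+2}, b_h ≥ 1/(H·2^{h+2}), and c_h ≥ 1/4. -/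
/-- In the Example 3.1 chain, the occupancy sequences of the offline
policy `π_b` satisfy `a h ≥ 1/2^(h+2)`, `b h ≥ 1/(H·2^(h+2))` and `c h ≥ 1/4`
for every layer `1 ≤ h ≤ H`. -/
theorem offline_occupancy_lower_bounds
    (H : ℕ) (hH : 2 ≤ H) (a b c : ℕ → ℝ)
    (ha1 : a 1 = ((H : ℝ) - 1) / (2 * H))
    (hb1 : b 1 = 1 / (2 * H))
    (hc1 : c 1 = 1 / 2)
    (ha : ∀ h, 1 ≤ h → a (h + 1) = ((1 - 1 / (H : ℝ) ^ 2) / 2) * a h)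
    (hb : ∀ h, 1 ≤ h →
      b (h + 1) = (1 / (H : ℝ) ^ 2) * a h + ((1 - 1 / (H : ℝ) ^ 2) / 2) * b h)
    (hc : ∀ h, 1 ≤ h →
      c (h + 1) = ((1 - 1 / (H : ℝ) ^ 2) / 2) * a h
        + ((1 + 1 / (H : ℝ) ^ 2) / 2) * b h + c h) :
    ∀ h, 1 ≤ h → h ≤ H →
      a h ≥ 1 / 2 ^ (h + 2) ∧ b h ≥ 1 / ((H : ℝ) * 2 ^ (h + 2)) ∧ c h ≥ 1 / 4 := by
  have hH2 : (2 : ℝ) ≤ (H : ℝ) := by exact_mod_cast hH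
  have hHpos : (0 : ℝ) < (H : ℝ) := by linarith
  have hH2pos : (0 : ℝ) < (H : ℝ) ^ 2 := by positivity
  set x : ℝ := 1 / (H : ℝ) ^ 2 with hxdef
  have hxpos : 0 < x := by positivity
  have hxle : x ≤ 1 / 4 := by
    rw [hxdef, div_le_div_iff₀ hH2pos (by norm_num)]
    nlinarith
  set q : ℝ := (1 - x) / 2 with hqdef
  have hqpos : 0 < q := by rw [hqdef]; linarith
  have hqle : q ≤ 1 / 2 := by rw [hqdef]; linarith
  -- strengthened induction
  have key : ∀ h, 1 ≤ h →
      a h ≥ (1 / 4) * q ^ (h - 1) ∧ b h ≥ (1 / (2 * H)) * q ^ (h - 1) ∧ c h ≥ 1 / 2 := by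
    intro h hh
    induction h, hh using Nat.le_induction with
    | base =>
      simp only [Nat.sub_self, pow_zero, mul_one]
      refine ⟨?_, le_of_eq hb1.symm, le_of_eq hc1.symm⟩
      rw [ha1, ge_iff_le, le_div_iff₀ (by linarith)]
      linarith
    | succ h hh ih =>
      obtain ⟨iha, ihb, ihc⟩ := ih
      have hq1 : q ^ (h - 1) * q = q ^ h := by
        rw [← pow_succ]
        congr 1
        omega
      have hapos : 0 < a h := lt_of_lt_of_le (by positivity) iha
      have hbpos : 0 < b h := lt_of_lt_of_le (by positivity) ihb
      have hsub : h + 1 - 1 = h := rfl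
      refine ⟨?_, ?_, ?_⟩
      · rw [ha h hh, hsub]
        calc ((1 - x) / 2) * a h = q * a h := by rw [hqdef]
          _ ≥ q * ((1 / 4) * q ^ (h - 1)) :=
              mul_le_mul_of_nonneg_left iha (le_of_lt hqpos)
          _ = (1 / 4) * q ^ h := by rw [← hq1]; ring
      · rw [hb h hh, hsub]
        have h1 : q * b h ≥ q * ((1 / (2 * H)) * q ^ (h - 1)) :=
          mul_le_mul_of_nonneg_left ihb (le_of_lt hqpos)
        have h2 : x * a h ≥ 0 := by positivity
        calc x * a h + ((1 - x) / 2) * b h = x * a h + q * b h := by rw [hqdef]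
          _ ≥ 0 + q * ((1 / (2 * H)) * q ^ (h - 1)) := add_le_add h2 h1
          _ = (1 / (2 * H)) * q ^ h := by rw [← hq1]; ring
      · rw [hc h hh]
        have h1 : q * a h ≥ 0 := mul_nonneg hqpos.le hapos.le
        have h2 : ((1 + x) / 2) * b h ≥ 0 := by positivity
        linarith
  intro h hh1 hhH
  obtain ⟨iha, ihb, ihc⟩ := key h hh1
  -- Bernoulli: (1 - x)^(h-1) ≥ 1 - (h-1)*x ≥ 1/2
  have hbern : (1 - x) ^ (h - 1) ≥ 1 / 2 := by
    have hB := one_add_mul_le_pow (a := -x) (by linarith) (h - 1)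
    have hcast : ((h - 1 : ℕ) : ℝ) = (h : ℝ) - 1 := by
      have h1 : (1 : ℕ) ≤ h := hh1
      push_cast [Nat.cast_sub h1]
      ring
    have hn : ((h - 1 : ℕ) : ℝ) ≤ (H : ℝ) - 1 := by
      have : (h : ℝ) ≤ (H : ℝ) := by exact_mod_cast hhH
      rw [hcast]; linarith
    have hx' : ((h - 1 : ℕ) : ℝ) * x ≤ ((H : ℝ) - 1) * x :=
      mul_le_mul_of_nonneg_right hn (le_of_lt hxpos)
    have hHx : ((H : ℝ) - 1) * x ≤ 1 / 2 := by
      rw [hxdef, mul_one_div, div_le_div_iff₀ hH2pos (by norm_num)]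
      nlinarith
    have hfin : 1 + ((h - 1 : ℕ) : ℝ) * (-x) ≥ 1 / 2 := by
      have he : ((h - 1 : ℕ) : ℝ) * (-x) = -(((h - 1 : ℕ) : ℝ) * x) := by ring
      rw [he]; linarith
    have heq : (1 + (-x)) ^ (h - 1) = (1 - x) ^ (h - 1) := by ring_nf
    rw [← heq]
    exact le_trans hfin hB
  have hqpow : q ^ (h - 1) ≥ (1 / 2) * (1 / 2) ^ (h - 1) := by
    have hq12 : q = (1 - x) * (1 / 2) := by rw [hqdef]; ring
    rw [hq12, mul_pow]
    have hnn : (0:ℝ) ≤ (1/2 : ℝ) ^ (h - 1) := by positivity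
    exact mul_le_mul_of_nonneg_right hbern hnn
  have hpow2 : (1 / 2 : ℝ) ^ (h - 1) = 1 / 2 ^ (h - 1) := by
    rw [div_pow, one_pow]
  have hexp : (2 : ℝ) ^ (h + 2) = 2 ^ (h - 1) * 8 := by
    rw [show h + 2 = (h - 1) + 3 by omega, pow_add]
    norm_num
  have h2pos : (0 : ℝ) < 2 ^ (h - 1) := by positivity
  refine ⟨?_, ?_, by linarith⟩
  · calc a h ≥ (1 / 4) * q ^ (h - 1) := iha
      _ ≥ (1 / 4) * ((1 / 2) * (1 / 2) ^ (h - 1)) :=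
          mul_le_mul_of_nonneg_left hqpow (by norm_num)
      _ = 1 / 2 ^ (h + 2) := by
          rw [hpow2, hexp]
          field_simp
          ring
  · calc b h ≥ (1 / (2 * H)) * q ^ (h - 1) := ihb
      _ ≥ (1 / (2 * H)) * ((1 / 2) * (1 / 2) ^ (h - 1)) :=
          mul_le_mul_of_nonneg_left hqpow (by positivity)
      _ ≥ 1 / ((H : ℝ) * 2 ^ (h + 2)) := by
          rw [hpow2, hexp]
          have heq : (1 / (2 * (H:ℝ))) * (1 / 2 * (1 / 2 ^ (h - 1)))
              = 1 / ((H:ℝ) * 2 ^ (h - 1) * 4) := by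
            field_simp
            ring
          rw [heq, ge_iff_le]
          apply one_div_le_one_div_of_le (by positivity)
          nlinarith [h2pos, hHpos]
end

section
/- Let H ≥ 2 be a natural number and let a, b : ℕ → ℝ be the occupancy sequences of the offline policy π_b in the Example 3.1 chain, i.e. a_1 = (H−1)/(2H), b_1 = 1/(2H), a_{h+1} = ((1−1/H²)/2)·a_h, and b_{h+1} = (1/H²)·a_h + ((1−1/H²)/2)·b_h. Then for every h with 1 ≤ h ≤ H, (H−1)·b_h ≤ 3·a_h (equivalently, the ratio of the occupancy of x¹ to that of x² under π_b is at least (H−1)/3 in every layer up to H). -/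
/-- In the Example 3.1 chain, under the offline policy `π_b`, the ratio
of the occupancy of `x¹` to that of `x²` is at least `(H−1)/3` in every layer up to
`H`, i.e. `(H−1)·b h ≤ 3·a h`. -/
theorem offline_occupancy_ratio_bound
    (H : ℕ) (hH : 2 ≤ H) (a b : ℕ → ℝ)
    (ha1 : a 1 = ((H : ℝ) - 1) / (2 * H))
    (hb1 : b 1 = 1 / (2 * H))
    (ha : ∀ h, 1 ≤ h → a (h + 1) = ((1 - 1 / (H : ℝ) ^ 2) / 2) * a h)
    (hb : ∀ h, 1 ≤ h →
      b (h + 1) = (1 / (H : ℝ) ^ 2) * a h + ((1 - 1 / (H : ℝ) ^ 2) / 2) * b h) :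
    ∀ h, 1 ≤ h → h ≤ H → ((H : ℝ) - 1) * b h ≤ 3 * a h := by
  have hHR : (2 : ℝ) ≤ (H : ℝ) := by exact_mod_cast hH
  have hHpos : (0 : ℝ) < (H : ℝ) := by linarith
  have hHne : (H : ℝ) ≠ 0 := ne_of_gt hHpos
  have hH2ne : ((H : ℝ) ^ 2) ≠ 0 := pow_ne_zero _ hHne
  have hqnn : (0 : ℝ) ≤ (1 - 1 / (H : ℝ) ^ 2) / 2 := by
    have : 1 / (H : ℝ) ^ 2 ≤ 1 := by
      rw [div_le_one (by positivity)]
      nlinarith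
    linarith
  -- a_h ≥ 0 for all h ≥ 1
  have hanonneg : ∀ h, 1 ≤ h → 0 ≤ a h := by
    intro h hh
    induction h, hh using Nat.le_induction with
    | base =>
      rw [ha1]; apply div_nonneg <;> linarith
    | succ n hn ih =>
      rw [ha n hn]; exact mul_nonneg hqnn ih
  -- key invariant: (H²−1)·b_h = (H + 2h − 1)·a_h
  have key : ∀ h, 1 ≤ h → ((H : ℝ) ^ 2 - 1) * b h = ((H : ℝ) + 2 * h - 1) * a h := by
    intro h hh
    induction h, hh using Nat.le_induction with
    | base =>
      rw [ha1, hb1]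
      push_cast
      field_simp
      ring
    | succ n hn ih =>
      rw [ha n hn, hb n hn]
      push_cast
      have e1 : ((H : ℝ) ^ 2 - 1) * ((1 / (H : ℝ) ^ 2) * a n + ((1 - 1 / (H : ℝ) ^ 2) / 2) * b n)
          = ((H : ℝ) ^ 2 - 1) * (1 / (H : ℝ) ^ 2) * a n
            + ((1 - 1 / (H : ℝ) ^ 2) / 2) * (((H : ℝ) ^ 2 - 1) * b n) := by ring
      rw [e1, ih]
      field_simp
      ring
  intro h hh hhH
  have hbound := key h hh
  have hA := hanonneg h hh
  have hcoef : ((H : ℝ) + 2 * h - 1) ≤ 3 * ((H : ℝ) + 1) := by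
    have : (h : ℝ) ≤ (H : ℝ) := by exact_mod_cast hhH
    linarith
  have hHp1 : (0 : ℝ) < (H : ℝ) + 1 := by linarith
  have h1 : ((H : ℝ) + 1) * (((H : ℝ) - 1) * b h) = ((H : ℝ) + 2 * h - 1) * a h := by
    rw [← hbound]; ring
  have h2 : ((H : ℝ) + 1) * (((H : ℝ) - 1) * b h) ≤ ((H : ℝ) + 1) * (3 * a h) := by
    rw [h1]
    calc ((H : ℝ) + 2 * h - 1) * a h ≤ 3 * ((H : ℝ) + 1) * a h :=
          mul_le_mul_of_nonneg_right hcoef hA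
      _ = ((H : ℝ) + 1) * (3 * a h) := by ring
  exact le_of_mul_le_mul_left h2 hHp1
end

section
/- Let H ≥ 2 be a natural number, let p¹, p² : ℕ → ℝ take values in [0,1], and let a, b : ℕ → ℝ satisfy a_1 = (H−1)/(2H), b_1 = 1/(2H), a_{h+1} = ((1−p¹_h)/2)·a_h, and b_{h+1} = p¹_h·a_h + ((1−p²_h)/2)·b_h. Then for every h ≥ 1, a_h + b_h ≤ (1/2)^{h−1}. (Thus under any Markov policy in the Example 3.1 chain, the total occupancy of the states x¹ and x² at layer h is at most 2^{−(h−1)}.) -/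
/-!
The potential `2 a_h + b_h` at least halves from one layer to the next: the mass `p¹ a_h` that
moves from `x¹` to `x²` is counted once in `b_{h+1}` but twice in `a_h`, so
`2 a_{h+1} + b_{h+1} = a_h + (1 - p²_h)/2 · b_h ≤ (2 a_h + b_h)/2`. Initially the potential is
`1 - 1/(2H) ≤ 1`, and `a_h + b_h` is bounded by it because `a_h ≥ 0`.
-/

lemma occupancy_step {p q x y : ℝ} (hp : 0 ≤ p ∧ p ≤ 1) (hq : 0 ≤ q ∧ q ≤ 1)
    (hx : 0 ≤ x) (hy : 0 ≤ y) :
    0 ≤ (1 - p) / 2 * x ∧ 0 ≤ p * x + (1 - q) / 2 * y ∧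
      2 * ((1 - p) / 2 * x) + (p * x + (1 - q) / 2 * y) ≤ (2 * x + y) / 2 := by
  obtain ⟨hp0, hp1⟩ := hp
  obtain ⟨hq0, hq1⟩ := hq
  refine ⟨mul_nonneg (by linarith) hx,
    add_nonneg (mul_nonneg hp0 hx) (mul_nonneg (by linarith) hy), ?_⟩
  nlinarith [mul_nonneg hq0 hy]

theorem potential_le_half_pow (p1 p2 a b : ℕ → ℝ)
    (hp1 : ∀ h, 0 ≤ p1 h ∧ p1 h ≤ 1) (hp2 : ∀ h, 0 ≤ p2 h ∧ p2 h ≤ 1)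
    (ha1 : 0 ≤ a 1) (hb1 : 0 ≤ b 1) (hab1 : 2 * a 1 + b 1 ≤ 1)
    (ha : ∀ h, 1 ≤ h → a (h + 1) = ((1 - p1 h) / 2) * a h)
    (hb : ∀ h, 1 ≤ h → b (h + 1) = p1 h * a h + ((1 - p2 h) / 2) * b h) :
    ∀ h, 1 ≤ h → 0 ≤ a h ∧ 0 ≤ b h ∧ 2 * a h + b h ≤ (1 / 2 : ℝ) ^ (h - 1) := by
  intro h hh
  induction h, hh using Nat.le_induction with
  | base => simpa using ⟨ha1, hb1, hab1⟩
  | succ k hk ih =>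
    obtain ⟨ha0, hb0, hpot⟩ := ih
    obtain ⟨ha', hb', hstep⟩ := occupancy_step (hp1 k) (hp2 k) ha0 hb0
    rw [ha k hk, hb k hk, show k + 1 - 1 = k - 1 + 1 by omega, pow_succ]
    exact ⟨ha', hb', by linarith⟩

/-- In the Example 3.1 chain, under any Markov policy the total
occupancy of the states `x¹` and `x²` at layer `h` is at most `2^{−(h−1)}`. -/
theorem any_policy_top_occupancy_decay
    (H : ℕ) (hH : 2 ≤ H) (p1 p2 : ℕ → ℝ)
    (hp1 : ∀ h, 0 ≤ p1 h ∧ p1 h ≤ 1) (hp2 : ∀ h, 0 ≤ p2 h ∧ p2 h ≤ 1)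
    (a b : ℕ → ℝ)
    (ha1 : a 1 = ((H : ℝ) - 1) / (2 * H))
    (hb1 : b 1 = 1 / (2 * H))
    (ha : ∀ h, 1 ≤ h → a (h + 1) = ((1 - p1 h) / 2) * a h)
    (hb : ∀ h, 1 ≤ h → b (h + 1) = p1 h * a h + ((1 - p2 h) / 2) * b h) :
    ∀ h, 1 ≤ h → a h + b h ≤ (1 / 2 : ℝ) ^ (h - 1) := by
  have hH' : (2 : ℝ) ≤ H := by exact_mod_cast hH
  have ha1_nonneg : 0 ≤ a 1 := by rw [ha1]; exact div_nonneg (by linarith) (by positivity)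
  have hb1_nonneg : 0 ≤ b 1 := by rw [hb1]; positivity
  have hpot1 : 2 * a 1 + b 1 ≤ 1 := by
    have h1 : 2 * a 1 + b 1 = 1 - 1 / (2 * H) := by
      rw [ha1, hb1]; field_simp; ring
    have h2 : 0 ≤ 1 / (2 * (H : ℝ)) := by positivity
    linarith
  intro h hh
  obtain ⟨ha0, -, hpot⟩ :=
    potential_le_half_pow p1 p2 a b hp1 hp2 ha1_nonneg hb1_nonneg hpot1 ha hb h hh
  linarith
end

section
/- Let Φ be a finite type, ε > 0 a real number, C ≥ 0 a real number, and d, ν : Φ → ℝ functions with d φ ≥ 0 and ν φ > 0 for every φ ∈ Φ. Assume that ∑_{φ ∈ Φ} d φ ≥ ε, and that for every subset I ⊆ Φ with ∑_{φ ∈ I} d φ ≥ ε one has ∑_{φ ∈ I} d φ ≤ C · ∑_{φ ∈ I} ν φ. Then there exists a subset J ⊆ Φ such that ∑_{φ ∈ J} d φ < ε and d φ ≤ C · ν φ for every φ ∈ Φ \ J. -/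
/-- Conversion lemma for the aggregated concentrability coefficient:
if every subcollection of aggregations carrying at least `ε` of the occupancy `d`
has occupancy-to-data ratio at most `C`, then there is a set `J` of aggregations of
occupancy less than `ε` outside of which the pointwise ratio is at most `C`. -/
theorem aggregated_concentrability_conversion
    {Φ : Type*} [Fintype Φ] (ε C : ℝ) (hε : 0 < ε) (hC : 0 ≤ C)
    (d ν : Φ → ℝ) (hd : ∀ φ, 0 ≤ d φ) (hν : ∀ φ, 0 < ν φ)
    (htot : ε ≤ ∑ φ, d φ)
    (hcov : ∀ I : Finset Φ, ε ≤ ∑ φ ∈ I, d φ → ∑ φ ∈ I, d φ ≤ C * ∑ φ ∈ I, ν φ) :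
    ∃ J : Finset Φ, (∑ φ ∈ J, d φ) < ε ∧ ∀ φ ∉ J, d φ ≤ C * ν φ := by
  classical
  refine ⟨Finset.univ.filter (fun φ => C * ν φ < d φ), ?_, ?_⟩
  · by_contra h
    push_neg at h
    set J := Finset.univ.filter (fun φ => C * ν φ < d φ)
    have hne : J.Nonempty := by
      rcases Finset.eq_empty_or_nonempty J with he | hne
      · rw [he] at h; simp at h; linarith
      · exact hne
    have hlt : ∑ φ ∈ J, C * ν φ < ∑ φ ∈ J, d φ :=
      Finset.sum_lt_sum_of_nonempty hne (fun φ hφ => (Finset.mem_filter.mp hφ).2)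
    have := hcov J h
    rw [Finset.mul_sum] at this
    linarith
  · intro φ hφ
    simp only [Finset.mem_filter, Finset.mem_univ, true_and, not_lt] at hφ
    exact hφ
end

section
/- Let Ω and Ψ be nonempty finite types, let q : Ω → ℝ satisfy q ω > 0 for all ω, let p : Ψ → Ω → ℝ, and let n be a natural number. Then ∑_{ω⃗ : Fin n → Ω} ( ((1/|Ψ|) · ∑_{ψ ∈ Ψ} ∏_{i} p ψ (ω⃗ i))² / ∏_{i} q (ω⃗ i) ) = (1/|Ψ|²) · ∑_{ψ ∈ Ψ} ∑_{ψ' ∈ Ψ} ( ∑_{ω ∈ Ω} p ψ ω · p ψ' ω / q ω )^n, where |Ψ| denotes the cardinality of Ψ and products over i range over Fin n. -/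
/-- χ²-divergence computation for a uniform mixture of product
distributions: the chi-square integrand of the mixture of `n`-fold products against
the product reference `q^{⊗n}` equals the average over pairs of decoders of the
`n`-th power of the pairwise overlap integral. -/
theorem chi_square_mixture_of_products
    {Ω Ψ : Type*} [Fintype Ω] [Fintype Ψ] [Nonempty Ω] [Nonempty Ψ]
    (q : Ω → ℝ) (hq : ∀ ω, 0 < q ω) (p : Ψ → Ω → ℝ) (n : ℕ) :
    ∑ ω : Fin n → Ω,
      ((1 / (Fintype.card Ψ : ℝ)) * ∑ ψ, ∏ i, p ψ (ω i)) ^ 2 / ∏ i, q (ω i) =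
      (1 / (Fintype.card Ψ : ℝ) ^ 2) *
        ∑ ψ, ∑ ψ', (∑ w, p ψ w * p ψ' w / q w) ^ n := by
  have key : ∀ f : Ω → ℝ, ∑ ω : Fin n → Ω, ∏ i, f (ω i) = (∑ w, f w) ^ n := by
    intro f
    rw [← Fintype.piFinset_univ, ← Finset.prod_univ_sum]
    simp [Finset.prod_const]
  have step1 : ∀ ω : Fin n → Ω,
      ((1 / (Fintype.card Ψ : ℝ)) * ∑ ψ, ∏ i, p ψ (ω i)) ^ 2 / ∏ i, q (ω i) =
      (1 / (Fintype.card Ψ : ℝ) ^ 2) *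
        ∑ ψ, ∑ ψ', ∏ i, (p ψ (ω i) * p ψ' (ω i) / q (ω i)) := by
    intro ω
    have hQ : (∏ i, q (ω i)) ≠ 0 :=
      Finset.prod_ne_zero_iff.2 fun i _ => (hq (ω i)).ne'
    rw [div_eq_iff hQ, mul_pow, sq (∑ ψ, ∏ i, p ψ (ω i)), Finset.sum_mul_sum,
      div_pow, one_pow, mul_assoc]
    congr 1
    rw [Finset.sum_mul]
    refine Finset.sum_congr rfl fun ψ _ => ?_
    rw [Finset.sum_mul]
    refine Finset.sum_congr rfl fun ψ' _ => ?_
    rw [← Finset.prod_mul_distrib, ← Finset.prod_mul_distrib]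
    refine Finset.prod_congr rfl fun i _ => ?_
    exact (div_mul_cancel₀ _ (hq (ω i)).ne').symm
  simp only [step1]
  rw [← Finset.mul_sum]
  congr 1
  rw [Finset.sum_comm]
  refine Finset.sum_congr rfl fun ψ _ => ?_
  rw [Finset.sum_comm]
  refine Finset.sum_congr rfl fun ψ' _ => ?_
  exact key fun w => p ψ w * p ψ' w / q w
end

section
/- Let S and m be positive natural numbers with m ∣ S, and let ξ be a real number with 0 < ξ < 1. Then ∑_{t = 0}^{S/m} [ if (t : ℝ) ≥ (1 + ξ)·S/m² then (S/m choose t) · ((S − S/m) choose (S/m − t)) else 0 ] ≤ exp(−2·ξ²·S/m³) · (S choose S/m), where (· choose ·) denotes the binomial coefficient and exp is the real exponential. -/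
/-!
Chernoff's bound with parameter `λ = 4ξ/m` reduces the tail to the hypergeometric generating
function `∑ₖ C(K,k) C(M,n-k) xᵏ`. Expanding `x = 1 + (x - 1)` exhibits its factorial moments
`C(K,j) C(N-j,n-j)` (Vandermonde), and `C(N-j,n-j) ≤ C(N,n) (n/N)ʲ` dominates it by the binomial
generating function `C(N,n) (1 - p + p x)ᴷ`, `p = n/N`. Hoeffding's lemma for a Bernoulli(`p`)
variable bounds this by `exp (K (pλ + λ²/8))`, and with `p = 1/m` the exponent is `-2ξ²S/m³`.
-/

open Finset Real

theorem Nat.sum_range_choose_mul_choose_mul_choose (K M n j : ℕ) (hj : j ≤ n) :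
    ∑ k ∈ range (n + 1), K.choose k * k.choose j * M.choose (n - k) =
      K.choose j * (K - j + M).choose (n - j) := by
  rw [show n + 1 = j + (n - j + 1) by omega, sum_range_add,
    sum_eq_zero fun k hk => by rw [Nat.choose_eq_zero_of_lt (mem_range.1 hk), mul_zero, zero_mul],
    zero_add, Nat.add_choose_eq, Nat.sum_antidiagonal_eq_sum_range_succ_mk, mul_sum]
  refine sum_congr rfl fun i _ => ?_
  rw [Nat.choose_mul (Nat.le_add_right j i), Nat.add_sub_cancel_left,
    show n - (j + i) = n - j - i by omega, mul_assoc]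

theorem one_add_pow_eq_sum_range_choose_mul_pow {R : Type*} [CommSemiring R] {k n : ℕ}
    (hk : k ≤ n) (z : R) :
    (1 + z) ^ k = ∑ j ∈ range (n + 1), (k.choose j : R) * z ^ j := by
  rw [add_comm, add_pow]
  refine sum_subset (range_subset_range.2 (by omega)) (fun j _ hj => ?_) |>.trans
    (sum_congr rfl fun j _ => by rw [one_pow, mul_one, mul_comm])
  rw [Nat.choose_eq_zero_of_lt (by simpa using hj)]; simp

theorem sum_choose_mul_choose_mul_one_add_pow {R : Type*} [CommSemiring R] (K M n : ℕ) (z : R) :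
    ∑ k ∈ range (n + 1), ((K.choose k * M.choose (n - k) : ℕ) : R) * (1 + z) ^ k =
      ∑ j ∈ range (n + 1), ((K.choose j * (K - j + M).choose (n - j) : ℕ) : R) * z ^ j := by
  calc _ = ∑ k ∈ range (n + 1), ∑ j ∈ range (n + 1),
          ((K.choose k * k.choose j * M.choose (n - k) : ℕ) : R) * z ^ j := by
        refine sum_congr rfl fun k hk => ?_
        rw [one_add_pow_eq_sum_range_choose_mul_pow (Nat.lt_succ_iff.1 (mem_range.1 hk)),
          mul_sum]
        refine sum_congr rfl fun j _ => ?_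
        push_cast; ring
    _ = _ := by
        rw [sum_comm]
        refine sum_congr rfl fun j hj => ?_
        rw [← sum_mul, ← Nat.cast_sum,
          Nat.sum_range_choose_mul_choose_mul_choose K M n j (Nat.lt_succ_iff.1 (mem_range.1 hj))]

theorem Nat.choose_sub_sub_le_choose_mul_div_pow {N n j : ℕ} (hjn : j ≤ n) (hnN : n ≤ N) :
    ((N - j).choose (n - j) : ℝ) ≤ N.choose n * ((n : ℝ) / N) ^ j := by
  induction j with
  | zero => simp
  | succ j ih =>
    have hN : (0 : ℝ) < N := by exact_mod_cast (show 0 < N by omega)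
    have hjN : (j : ℝ) < N := by exact_mod_cast (show j < N by omega)
    have hnN' : (n : ℝ) ≤ N := by exact_mod_cast hnN
    have pascal : ((N : ℝ) - j) * (N - (j + 1)).choose (n - (j + 1)) =
        (N - j).choose (n - j) * (n - j) := by
      have h := Nat.add_one_mul_choose_eq (N - (j + 1)) (n - (j + 1))
      rw [show N - (j + 1) + 1 = N - j by omega, show n - (j + 1) + 1 = n - j by omega] at h
      rw [← Nat.cast_sub (by omega), ← Nat.cast_sub (by omega)]
      exact_mod_cast h
    rw [pow_succ, ← mul_assoc, ← mul_div_assoc, le_div_iff₀ hN]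
    refine le_of_mul_le_mul_left ?_ (sub_pos.2 hjN)
    calc ((N : ℝ) - j) * ((N - (j + 1)).choose (n - (j + 1)) * N)
        = ((n : ℝ) - j) * N * (N - j).choose (n - j) := by linear_combination (N : ℝ) * pascal
      _ ≤ n * (N - j) * (N - j).choose (n - j) :=
        mul_le_mul_of_nonneg_right (by nlinarith) (Nat.cast_nonneg _)
      _ ≤ n * (N - j) * (N.choose n * ((n : ℝ) / N) ^ j) := by gcongr; exact ih (by omega)
      _ = _ := by ring

theorem sum_range_choose_mul_pow_le_one_add_pow (K n : ℕ) {w : ℝ} (hw : 0 ≤ w) :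
    ∑ j ∈ range n, (K.choose j : ℝ) * w ^ j ≤ (1 + w) ^ K := by
  rw [one_add_pow_eq_sum_range_choose_mul_pow (Nat.le_add_left K n)]
  exact sum_le_sum_of_subset_of_nonneg (range_subset_range.2 (by omega))
    fun j _ _ => by positivity

theorem sum_choose_mul_choose_mul_pow_le (K M n : ℕ) (hn : n ≤ K + M) {x : ℝ} (hx : 1 ≤ x) :
    ∑ k ∈ range (n + 1), ((K.choose k * M.choose (n - k) : ℕ) : ℝ) * x ^ k ≤
      (K + M).choose n *
        (1 - (n : ℝ) / (K + M : ℕ) + (n : ℝ) / (K + M : ℕ) * x) ^ K := by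
  set p : ℝ := (n : ℝ) / (K + M : ℕ)
  have hp : 0 ≤ p := by positivity
  have hz : 0 ≤ x - 1 := sub_nonneg.2 hx
  calc _ = ∑ k ∈ range (n + 1),
          ((K.choose k * M.choose (n - k) : ℕ) : ℝ) * (1 + (x - 1)) ^ k := by simp
    _ = ∑ j ∈ range (n + 1),
          ((K.choose j * (K - j + M).choose (n - j) : ℕ) : ℝ) * (x - 1) ^ j :=
        sum_choose_mul_choose_mul_one_add_pow K M n (x - 1)
    _ ≤ ∑ j ∈ range (n + 1),
          ((K + M).choose n : ℝ) * ((K.choose j : ℝ) * (p * (x - 1)) ^ j) := by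
        refine sum_le_sum fun j hj => ?_
        rcases le_or_gt j K with hjK | hKj
        · rw [show K - j + M = K + M - j by omega, Nat.cast_mul, mul_pow]
          have := Nat.choose_sub_sub_le_choose_mul_div_pow (N := K + M)
            (Nat.lt_succ_iff.1 (mem_range.1 hj)) hn
          calc _ = (K.choose j : ℝ) * (x - 1) ^ j * ((K + M - j).choose (n - j) : ℝ) := by ring
            _ ≤ (K.choose j : ℝ) * (x - 1) ^ j * ((K + M).choose n * p ^ j) := by gcongr
            _ = _ := by ring
        · simp [Nat.choose_eq_zero_of_lt hKj]
    _ ≤ (K + M).choose n * (1 - p + p * x) ^ K := by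
        rw [← mul_sum, show 1 - p + p * x = 1 + p * (x - 1) by ring]
        gcongr
        exact sum_range_choose_mul_pow_le_one_add_pow K (n + 1) (mul_nonneg hp hz)

open ProbabilityTheory MeasureTheory in
theorem one_sub_add_mul_exp_le (p : ℝ) (hp0 : 0 ≤ p) (hp1 : p ≤ 1) (y : ℝ) :
    1 - p + p * exp y ≤ exp (p * y + y ^ 2 / 8) := by
  let X : Bool → ℝ := fun b => cond b 1 0
  have hoeffding := (hasSubgaussianMGF_of_mem_Icc (X := X)
    (μ := bernoulliMeasure true false ⟨p, hp0, hp1⟩) (a := 0) (b := 1)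
    (measurable_of_finite X).aemeasurable (ae_of_all _ fun b => by cases b <;> simp [X])).mgf_le y
  simp only [mgf, X, integral_bernoulliMeasure] at hoeffding
  norm_num at hoeffding
  have e1 : exp (p * y) * exp (y * (1 - p)) = exp y := by rw [← exp_add]; ring_nf
  have e2 : exp (p * y) * exp (-(y * p)) = 1 := by rw [← exp_add]; ring_nf; exact exp_zero
  calc 1 - p + p * exp y = exp (p * y) * (p * exp (y * (1 - p)) + (1 - p) * exp (-(y * p))) := by
        linear_combination (-p) * e1 - (1 - p) * e2
    _ ≤ exp (p * y) * exp (y ^ 2 / 8) := by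
        gcongr; exact hoeffding.trans_eq (by ring_nf)
    _ = exp (p * y + y ^ 2 / 8) := (exp_add _ _).symm

theorem sum_ite_le_le_exp_mul_sum {ι : Type*} (s : Finset ι) {f : ι → ℝ}
    (hf : ∀ i ∈ s, 0 ≤ f i) (g : ι → ℝ) {l : ℝ} (hl : 0 ≤ l) (τ : ℝ) :
    ∑ i ∈ s, (if τ ≤ g i then f i else 0) ≤
      exp (-(l * τ)) * ∑ i ∈ s, f i * exp (l * g i) := by
  rw [mul_sum]
  refine sum_le_sum fun i hi => ?_
  split_ifs with h
  · calc f i = f i * 1 := (mul_one _).symm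
      _ ≤ f i * exp (l * g i - l * τ) :=
        mul_le_mul_of_nonneg_left (one_le_exp (by nlinarith)) (hf i hi)
      _ = _ := by rw [sub_eq_neg_add, exp_add]; ring
  · exact mul_nonneg (exp_pos _).le (mul_nonneg (hf i hi) (exp_pos _).le)

theorem chernoff_exponent_eq (m n : ℕ) (ξ : ℝ) :
    -(4 * ξ / m * ((1 + ξ) * (m * n) / m ^ 2)) +
        n * (n / (m * n) * (4 * ξ / m) + (4 * ξ / m) ^ 2 / 8) =
      -2 * ξ ^ 2 * (m * n) / m ^ 3 := by
  rcases eq_or_ne (n : ℝ) 0 with hn | hn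
  · simp [hn]
  rcases eq_or_ne (m : ℝ) 0 with hm | hm
  · simp [hm]
  field_simp
  ring

open Nat in
theorem overlap_concentration_general
    (S m : ℕ) (hdvd : m ∣ S)
    (ξ : ℝ) (hξ0 : 0 < ξ) :
    ∑ t ∈ Finset.range (S / m + 1),
      (if (1 + ξ) * (S : ℝ) / (m : ℝ) ^ 2 ≤ (t : ℝ) then
        ((Nat.choose (S / m) t * Nat.choose (S - S / m) (S / m - t) : ℕ) : ℝ)
      else 0) ≤
      Real.exp (-2 * ξ ^ 2 * (S : ℝ) / (m : ℝ) ^ 3) * (Nat.choose S (S / m) : ℝ) := by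
  set n := S / m
  have hnS : n ≤ S := Nat.div_le_self S m
  set l := 4 * ξ / m
  set p := (n : ℝ) / S
  have hl : 0 ≤ l := by positivity
  have hp1 : p ≤ 1 := div_le_one_of_le₀ (by exact_mod_cast hnS) (Nat.cast_nonneg _)
  have pgf := sum_choose_mul_choose_mul_pow_le n (S - n) n (by omega) (one_le_exp hl)
  rw [Nat.add_sub_cancel' hnS] at pgf
  have exponent := chernoff_exponent_eq m n ξ
  rw [← show (S : ℝ) = m * n by exact_mod_cast (Nat.mul_div_cancel' hdvd).symm] at exponent
  calc _ ≤ exp (-(l * ((1 + ξ) * S / m ^ 2))) * ∑ t ∈ range (n + 1),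
        ((n.choose t * (S - n).choose (n - t) : ℕ) : ℝ) * exp (l * t) :=
        sum_ite_le_le_exp_mul_sum _ (fun _ _ => Nat.cast_nonneg _) _ hl _
    _ ≤ exp (-(l * ((1 + ξ) * S / m ^ 2))) * (S.choose n * (1 - p + p * exp l) ^ n) := by
        simp only [mul_comm l, exp_nat_mul]
        gcongr
    _ ≤ exp (-(l * ((1 + ξ) * S / m ^ 2))) * (S.choose n * exp (p * l + l ^ 2 / 8) ^ n) := by
        have : 0 ≤ 1 - p + p * exp l := add_nonneg (sub_nonneg.2 hp1) (by positivity)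
        gcongr
        exact one_sub_add_mul_exp_le p (by positivity) hp1 l
    _ = _ := by rw [← exp_nat_mul, ← exponent, exp_add]; ring

open Nat in
/-- Overlap concentration lemma for random decoders
(hypergeometric tail, combinatorial form): for `m ∣ S` and `0 < ξ < 1`, the number
of size-`S/m` subsets of `{1,…,S}` whose intersection with a fixed size-`S/m`
subset has size at least `(1+ξ)·S/m²` is at most `exp(−2ξ²S/m³) · (S choose S/m)`. -/
theorem overlap_concentration
    (S m : ℕ) (hS : 0 < S) (hm : 0 < m) (hdvd : m ∣ S)
    (ξ : ℝ) (hξ0 : 0 < ξ) (hξ1 : ξ < 1) :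
    ∑ t ∈ Finset.range (S / m + 1),
      (if (1 + ξ) * (S : ℝ) / (m : ℝ) ^ 2 ≤ (t : ℝ) then
        ((Nat.choose (S / m) t * Nat.choose (S - S / m) (S / m - t) : ℕ) : ℝ)
      else 0) ≤
      Real.exp (-2 * ξ ^ 2 * (S : ℝ) / (m : ℝ) ^ 3) * (Nat.choose S (S / m) : ℝ) :=
  overlap_concentration_general S m hdvd ξ hξ0
end

section
/- Let Z and X be finite types and ψ : X → Z a function whose every fiber is nonempty; write n z for the cardinality of ψ⁻¹(z). Let H be a natural number, let r : ℕ → Z → ℝ, and let K : ℕ → Z → Z → ℝ. Define latent values V : ℕ → Z → ℝ by V H z = r H z and, for h < H, V h z = r h z + ∑_{z' ∈ Z} K h z z' · V (h+1) z'. Define lifted values V̂ : ℕ → X → ℝ by V̂ H x = r H (ψ x) and, for h < H, V̂ h x = r h (ψ x) + ∑_{x' ∈ X} (K h (ψ x) (ψ x') / n(ψ x')) · V̂ (h+1) x'. Then for every h ≤ H and every x ∈ X, V̂ h x = V h (ψ x). -/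
open Finset in
/-- Value-function lemma for block MDPs: the backward-recursion value
functions of the rich-observation chain (with uniform emissions over decoder fibers)
coincide with the latent value functions composed with the decoder `ψ`. -/
theorem block_mdp_value
    {Z X : Type*} [Fintype Z] [Fintype X] [DecidableEq Z]
    (ψ : X → Z) (hsurj : ∀ z, ∃ x, ψ x = z)
    (n : Z → ℝ) (hn : ∀ z, n z = ((univ.filter fun x => ψ x = z).card : ℝ))
    (H : ℕ) (r : ℕ → Z → ℝ) (K : ℕ → Z → Z → ℝ)
    (V : ℕ → Z → ℝ) (Vhat : ℕ → X → ℝ)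
    (hVH : ∀ z, V H z = r H z)
    (hV : ∀ h, h < H → ∀ z, V h z = r h z + ∑ z', K h z z' * V (h + 1) z')
    (hVhatH : ∀ x, Vhat H x = r H (ψ x))
    (hVhat : ∀ h, h < H → ∀ x,
      Vhat h x = r h (ψ x) + ∑ x', (K h (ψ x) (ψ x') / n (ψ x')) * Vhat (h + 1) x') :
    ∀ h, h ≤ H → ∀ x, Vhat h x = V h (ψ x) := by
  intro h hh
  obtain ⟨k, hd⟩ : ∃ k, H - h = k := ⟨_, rfl⟩
  induction k generalizing h with
  | zero =>
      have : h = H := by omega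
      subst this
      intro x; rw [hVhatH, hVH]
  | succ k ih =>
      have hlt : h < H := by omega
      have ih' : ∀ x, Vhat (h + 1) x = V (h + 1) (ψ x) :=
        ih (h + 1) (by omega) (by omega)
      intro x
      rw [hVhat h hlt, hV h hlt]
      congr 1
      calc ∑ x', K h (ψ x) (ψ x') / n (ψ x') * Vhat (h + 1) x'
          = ∑ z' : Z, ∑ x' ∈ univ.filter fun x' => ψ x' = z',
              K h (ψ x) (ψ x') / n (ψ x') * Vhat (h + 1) x' := by
            rw [← Finset.sum_fiberwise_of_maps_to (g := ψ) (fun x _ => mem_univ _)]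
        _ = ∑ z' : Z, K h (ψ x) z' * V (h + 1) z' := by
            refine Finset.sum_congr rfl fun z' _ => ?_
            have hne : n z' ≠ 0 := by
              rw [hn]
              obtain ⟨x0, hx0⟩ := hsurj z'
              have : x0 ∈ univ.filter fun x' => ψ x' = z' := by simp [hx0]
              have := Finset.card_pos.mpr ⟨x0, this⟩
              positivity
            have : ∑ x' ∈ univ.filter fun x' => ψ x' = z',
                K h (ψ x) (ψ x') / n (ψ x') * Vhat (h + 1) x'
                = ∑ _x' ∈ univ.filter fun x' => ψ x' = z',
                  K h (ψ x) z' / n z' * V (h + 1) z' := by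
              refine Finset.sum_congr rfl fun x' hx' => ?_
              rw [Finset.mem_filter] at hx'
              rw [ih' x', hx'.2]
            rw [this, Finset.sum_const, nsmul_eq_mul, ← hn z']
            field_simp
end
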